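/- arXiv:2602.13526 — 4 statements merged into one kernel-verified Lean document; each statement's English description precedes it below -/
import Mathlib

section
/- For m, n ∈ {0,1} (indices mod 2), τ in the upper half-plane, and all z, w ∈ ℂ, the theta functions satisfy the addition formula: θ_{1,1}²(z) θ_{0,0}²(w) + (−1)^{1+m+mn} θ_{m,n}²(z) θ_{m+1,n+1}²(w) = (−1)^{n+mn} θ_{m+1,n+1}(z+w) θ_{m+1,n+1}(z−w) θ_{m,n}²(0). -/
/-- Theta function with characteristics `m, n ∈ {0,1}`:
`θ_{m,n}(z,τ) = ∑_{k∈ℤ} exp(iπτ(k+m/2)² + 2πi(k+m/2)(z+n/2))`. -/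
noncomputable def theta (m n : ℕ) (z τ : ℂ) : ℂ :=
  ∑' k : ℤ, Complex.exp (Real.pi * Complex.I * τ * ((k : ℂ) + (m : ℂ) / 2) ^ 2
    + 2 * Real.pi * Complex.I * ((k : ℂ) + (m : ℂ) / 2) * (z + (n : ℂ) / 2))

namespace ThetaAux

open Complex

/-- The `k`-th term of the theta series. -/
noncomputable def T (m n : ℕ) (x τ : ℂ) (k : ℤ) : ℂ :=
  Complex.exp (Real.pi * Complex.I * τ * ((k : ℂ) + (m : ℂ) / 2) ^ 2
    + 2 * Real.pi * Complex.I * ((k : ℂ) + (m : ℂ) / 2) * (x + (n : ℂ) / 2))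

lemma theta_eq (m n : ℕ) (x τ : ℂ) : theta m n x τ = ∑' k : ℤ, T m n x τ k := rfl

lemma summable_T (m n : ℕ) (x : ℂ) {τ : ℂ} (hτ : 0 < τ.im) : Summable (T m n x τ) := by
  have h := (summable_jacobiTheta₂_term_iff ((m : ℂ) * τ / 2 + (x + (n : ℂ) / 2)) τ).mpr hτ
  have h2 := h.mul_left (Complex.exp (Real.pi * Complex.I * τ * ((m : ℂ) / 2) ^ 2
    + Real.pi * Complex.I * (m : ℂ) * (x + (n : ℂ) / 2)))
  refine h2.congr fun k => ?_
  rw [jacobiTheta₂_term, ← Complex.exp_add, T]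
  congr 1
  ring

lemma hasSum_T (m n : ℕ) (x : ℂ) {τ : ℂ} (hτ : 0 < τ.im) :
    HasSum (T m n x τ) (theta m n x τ) := by
  rw [theta_eq]; exact (summable_T m n x hτ).hasSum

lemma summable_norm_T (m n : ℕ) (x : ℂ) {τ : ℂ} (hτ : 0 < τ.im) :
    Summable (fun k => ‖T m n x τ k‖) :=
  summable_norm_iff.mpr (summable_T m n x hτ)

lemma summable_mulT (m n m' n' : ℕ) (x y : ℂ) {τ : ℂ} (hτ : 0 < τ.im) :
    Summable (fun q : ℤ × ℤ => T m n x τ q.1 * T m' n' y τ q.2) :=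
  summable_mul_of_summable_norm (summable_norm_T m n x hτ) (summable_norm_T m' n' y hτ)

lemma summable_mulT' (c : ℂ) (m n m' n' : ℕ) (x y : ℂ) {τ : ℂ} (hτ : 0 < τ.im) :
    Summable (fun q : ℤ × ℤ => (c * T m n x τ q.1) * T m' n' y τ q.2) :=
  ((summable_mulT m n m' n' x y hτ).mul_left c).congr fun q => by ring

/-- The even-parity set in `ℤ × ℤ`. -/
def S : Set (ℤ × ℤ) := {p | Even (p.1 + p.2)}

def eEven : ℤ × ℤ ≃ S where
  toFun q := ⟨(q.1 + q.2, q.1 - q.2), ⟨q.1, by dsimp; ring⟩⟩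
  invFun p := ((p.1.1 + p.1.2) / 2, (p.1.1 - p.1.2) / 2)
  left_inv q := by
    dsimp; rw [Prod.ext_iff]; constructor <;> dsimp <;> omega
  right_inv := fun ⟨⟨a, b⟩, h⟩ => by
    obtain ⟨r, hr⟩ := h
    apply Subtype.ext
    dsimp; rw [Prod.ext_iff]; constructor <;> dsimp <;> omega

def eOddA : ℤ × ℤ ≃ ↥(Sᶜ) where
  toFun q := ⟨(q.1 + q.2 + 1, q.1 - q.2), by
    simp only [S, Set.mem_compl_iff, Set.mem_setOf_eq, Int.even_iff]; omega⟩
  invFun p := ((p.1.1 + p.1.2 - 1) / 2, (p.1.1 - p.1.2 - 1) / 2)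
  left_inv q := by
    dsimp; rw [Prod.ext_iff]; constructor <;> dsimp <;> omega
  right_inv := fun ⟨⟨a, b⟩, h⟩ => by
    rw [S, Set.mem_compl_iff, Set.mem_setOf_eq, Int.even_iff] at h
    apply Subtype.ext
    dsimp; rw [Prod.ext_iff]; constructor <;> dsimp <;> omega

def eOddB : ℤ × ℤ ≃ ↥(Sᶜ) where
  toFun q := ⟨(q.1 + q.2, q.1 - q.2 - 1), by
    simp only [S, Set.mem_compl_iff, Set.mem_setOf_eq, Int.even_iff]; omega⟩
  invFun p := ((p.1.1 + p.1.2 + 1) / 2, (p.1.1 - p.1.2 - 1) / 2)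
  left_inv q := by
    dsimp; rw [Prod.ext_iff]; constructor <;> dsimp <;> omega
  right_inv := fun ⟨⟨a, b⟩, h⟩ => by
    rw [S, Set.mem_compl_iff, Set.mem_setOf_eq, Int.even_iff] at h
    apply Subtype.ext
    dsimp; rw [Prod.ext_iff]; constructor <;> dsimp <;> omega

lemma neg_one_pow_eq (n : ℕ) : ((-1 : ℂ)) ^ n = Complex.exp (Real.pi * Complex.I * n) := by
  rw [show (Real.pi : ℂ) * Complex.I * n = n * (Real.pi * Complex.I) by ring,
    Complex.exp_nat_mul, Complex.exp_pi_mul_I]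

lemma im_two_mul {τ : ℂ} (hτ : 0 < τ.im) : 0 < (2 * τ).im := by
  have : (2 * τ).im = 2 * τ.im := by simp [Complex.mul_im]
  rw [this]; positivity

/-- Product formula for `θ_{0,n}`. -/
lemma prodA (n : ℕ) (x y : ℂ) {τ : ℂ} (hτ : 0 < τ.im) :
    theta 0 n x τ * theta 0 n y τ =
      theta 0 0 (x + y) (2 * τ) * theta 0 0 (x - y) (2 * τ)
      + (-1 : ℂ) ^ n * (theta 1 0 (x + y) (2 * τ) * theta 1 0 (x - y) (2 * τ)) := by
  have h2τ := im_two_mul hτ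
  set F : ℤ × ℤ → ℂ := fun q => T 0 n x τ q.1 * T 0 n y τ q.2 with hF
  have hL : HasSum F (theta 0 n x τ * theta 0 n y τ) :=
    (hasSum_T 0 n x hτ).mul (hasSum_T 0 n y hτ) (summable_mulT 0 n 0 n x y hτ)
  have keyEv : ∀ q : ℤ × ℤ, ((F ∘ (Subtype.val : S → ℤ × ℤ)) ∘ eEven) q
      = T 0 0 (x + y) (2 * τ) q.1 * T 0 0 (x - y) (2 * τ) q.2 := by
    rintro ⟨u, v⟩
    simp only [hF, Function.comp, eEven, Equiv.coe_fn_mk, T, ← Complex.exp_add]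
    rw [Complex.exp_eq_exp_iff_exists_int]
    exact ⟨u * (n : ℤ), by push_cast; ring⟩
  have hEv : HasSum (F ∘ (Subtype.val : S → ℤ × ℤ))
      (theta 0 0 (x + y) (2 * τ) * theta 0 0 (x - y) (2 * τ)) := by
    have h0 : HasSum (fun q : ℤ × ℤ => T 0 0 (x + y) (2 * τ) q.1 * T 0 0 (x - y) (2 * τ) q.2)
        (theta 0 0 (x + y) (2 * τ) * theta 0 0 (x - y) (2 * τ)) :=
      (hasSum_T 0 0 (x + y) h2τ).mul (hasSum_T 0 0 (x - y) h2τ)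
        (summable_mulT 0 0 0 0 (x + y) (x - y) h2τ)
    exact (Equiv.hasSum_iff eEven).mp (h0.congr_fun keyEv)
  have keyOd : ∀ q : ℤ × ℤ, ((F ∘ (Subtype.val : ↥(Sᶜ) → ℤ × ℤ)) ∘ eOddA) q
      = ((-1 : ℂ) ^ n * T 1 0 (x + y) (2 * τ) q.1) * T 1 0 (x - y) (2 * τ) q.2 := by
    rintro ⟨u, v⟩
    rw [neg_one_pow_eq]
    simp only [hF, Function.comp, eOddA, Equiv.coe_fn_mk, T, ← Complex.exp_add]
    rw [Complex.exp_eq_exp_iff_exists_int]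
    exact ⟨u * (n : ℤ), by push_cast; ring⟩
  have hOd : HasSum (F ∘ (Subtype.val : ↥(Sᶜ) → ℤ × ℤ))
      ((-1 : ℂ) ^ n * theta 1 0 (x + y) (2 * τ) * theta 1 0 (x - y) (2 * τ)) := by
    have h0 : HasSum (fun q : ℤ × ℤ =>
        ((-1 : ℂ) ^ n * T 1 0 (x + y) (2 * τ) q.1) * T 1 0 (x - y) (2 * τ) q.2)
        ((-1 : ℂ) ^ n * theta 1 0 (x + y) (2 * τ) * theta 1 0 (x - y) (2 * τ)) :=
      ((hasSum_T 1 0 (x + y) h2τ).mul_left _).mul (hasSum_T 1 0 (x - y) h2τ)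
        (summable_mulT' _ 1 0 1 0 (x + y) (x - y) h2τ)
    exact (Equiv.hasSum_iff eOddA).mp (h0.congr_fun keyOd)
  have hR := hEv.add_compl hOd
  rw [hL.unique hR]; ring

/-- Product formula for `θ_{1,n}`. -/
lemma prodB (n : ℕ) (x y : ℂ) {τ : ℂ} (hτ : 0 < τ.im) :
    theta 1 n x τ * theta 1 n y τ =
      theta 0 0 (x + y) (2 * τ) * theta 1 0 (x - y) (2 * τ)
      + (-1 : ℂ) ^ n * (theta 1 0 (x + y) (2 * τ) * theta 0 0 (x - y) (2 * τ)) := by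
  have h2τ := im_two_mul hτ
  set F : ℤ × ℤ → ℂ := fun q => T 1 n x τ q.1 * T 1 n y τ q.2 with hF
  have hL : HasSum F (theta 1 n x τ * theta 1 n y τ) :=
    (hasSum_T 1 n x hτ).mul (hasSum_T 1 n y hτ) (summable_mulT 1 n 1 n x y hτ)
  have keyEv : ∀ q : ℤ × ℤ, ((F ∘ (Subtype.val : S → ℤ × ℤ)) ∘ eEven) q
      = ((-1 : ℂ) ^ n * T 1 0 (x + y) (2 * τ) q.1) * T 0 0 (x - y) (2 * τ) q.2 := by
    rintro ⟨u, v⟩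
    rw [neg_one_pow_eq]
    simp only [hF, Function.comp, eEven, Equiv.coe_fn_mk, T, ← Complex.exp_add]
    rw [Complex.exp_eq_exp_iff_exists_int]
    exact ⟨u * (n : ℤ), by push_cast; ring⟩
  have hEv : HasSum (F ∘ (Subtype.val : S → ℤ × ℤ))
      ((-1 : ℂ) ^ n * theta 1 0 (x + y) (2 * τ) * theta 0 0 (x - y) (2 * τ)) := by
    have h0 : HasSum (fun q : ℤ × ℤ =>
        ((-1 : ℂ) ^ n * T 1 0 (x + y) (2 * τ) q.1) * T 0 0 (x - y) (2 * τ) q.2)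
        ((-1 : ℂ) ^ n * theta 1 0 (x + y) (2 * τ) * theta 0 0 (x - y) (2 * τ)) :=
      ((hasSum_T 1 0 (x + y) h2τ).mul_left _).mul (hasSum_T 0 0 (x - y) h2τ)
        (summable_mulT' _ 1 0 0 0 (x + y) (x - y) h2τ)
    exact (Equiv.hasSum_iff eEven).mp (h0.congr_fun keyEv)
  have keyOd : ∀ q : ℤ × ℤ, ((F ∘ (Subtype.val : ↥(Sᶜ) → ℤ × ℤ)) ∘ eOddB) q
      = T 0 0 (x + y) (2 * τ) q.1 * T 1 0 (x - y) (2 * τ) q.2 := by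
    rintro ⟨u, v⟩
    simp only [hF, Function.comp, eOddB, Equiv.coe_fn_mk, T, ← Complex.exp_add]
    rw [Complex.exp_eq_exp_iff_exists_int]
    exact ⟨u * (n : ℤ), by push_cast; ring⟩
  have hOd : HasSum (F ∘ (Subtype.val : ↥(Sᶜ) → ℤ × ℤ))
      (theta 0 0 (x + y) (2 * τ) * theta 0 0 (x - y) (2 * τ) * 0 +
        theta 0 0 (x + y) (2 * τ) * theta 1 0 (x - y) (2 * τ)) := by
    have h0 : HasSum (fun q : ℤ × ℤ => T 0 0 (x + y) (2 * τ) q.1 * T 1 0 (x - y) (2 * τ) q.2)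
        (theta 0 0 (x + y) (2 * τ) * theta 1 0 (x - y) (2 * τ)) :=
      (hasSum_T 0 0 (x + y) h2τ).mul (hasSum_T 1 0 (x - y) h2τ)
        (summable_mulT 0 0 1 0 (x + y) (x - y) h2τ)
    simpa using (Equiv.hasSum_iff eOddB).mp (h0.congr_fun keyOd)
  have hR := hEv.add_compl hOd
  rw [hL.unique hR]; ring

lemma theta11_zero (τ : ℂ) : theta 1 1 0 τ = 0 := by
  have key : ∀ k : ℤ, T 1 1 0 τ ((-1 : ℤ) - k) = -T 1 1 0 τ k := by
    intro k
    have h : -T 1 1 0 τ k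
        = Complex.exp ((Real.pi : ℂ) * Complex.I
            + ((Real.pi : ℂ) * Complex.I * τ * ((k : ℂ) + (1 : ℕ) / 2) ^ 2
              + 2 * (Real.pi : ℂ) * Complex.I * ((k : ℂ) + (1 : ℕ) / 2)
                * (0 + (1 : ℕ) / 2))) := by
      rw [Complex.exp_add, Complex.exp_pi_mul_I, T]; ring_nf
    rw [h, T, Complex.exp_eq_exp_iff_exists_int]
    exact ⟨-(k + 1), by push_cast; ring⟩
  have h2 : theta 1 1 0 τ = -theta 1 1 0 τ := by
    conv_lhs => rw [theta_eq, ← Equiv.tsum_eq (Equiv.subLeft (-1 : ℤ)) (T 1 1 0 τ)]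
    have : ∀ k : ℤ, T 1 1 0 τ (Equiv.subLeft (-1 : ℤ) k) = -T 1 1 0 τ k := fun k => key k
    rw [tsum_congr this, tsum_neg, theta_eq]
  linear_combination h2 / 2

end ThetaAux

theorem stmt_9 (m n : ℕ) (hm : m ≤ 1) (hn : n ≤ 1) (τ : ℂ) (hτ : 0 < τ.im) (z w : ℂ) :
    theta 1 1 z τ ^ 2 * theta 0 0 w τ ^ 2
      + (-1 : ℂ) ^ (1 + m + m * n) * theta m n z τ ^ 2 *
          theta ((m + 1) % 2) ((n + 1) % 2) w τ ^ 2
    = (-1 : ℂ) ^ (n + m * n) * theta ((m + 1) % 2) ((n + 1) % 2) (z + w) τ *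
        theta ((m + 1) % 2) ((n + 1) % 2) (z - w) τ * theta m n 0 τ ^ 2 := by
  have h2 : (z + w) + (z - w) = z + z := by ring
  have h3 : (z + w) - (z - w) = w + w := by ring
  interval_cases m <;> interval_cases n <;>
    simp only [Nat.reduceAdd, Nat.reduceMod, Nat.reduceMul, pow_two]
  · -- m = 0, n = 0
    rw [ThetaAux.prodB 1 z z hτ, ThetaAux.prodA 0 w w hτ, ThetaAux.prodA 0 z z hτ,
      ThetaAux.prodB 1 w w hτ,
      mul_assoc ((-1 : ℂ) ^ 0) (theta 1 1 (z + w) τ) (theta 1 1 (z - w) τ),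
      ThetaAux.prodB 1 (z + w) (z - w) hτ, ThetaAux.prodA 0 0 0 hτ, h2, h3]
    simp only [sub_self, add_zero]
    norm_num
    ring
  · -- m = 0, n = 1
    rw [ThetaAux.prodB 1 z z hτ, ThetaAux.prodA 0 w w hτ, ThetaAux.prodA 1 z z hτ,
      ThetaAux.prodB 0 w w hτ,
      mul_assoc ((-1 : ℂ) ^ 1) (theta 1 0 (z + w) τ) (theta 1 0 (z - w) τ),
      ThetaAux.prodB 0 (z + w) (z - w) hτ, ThetaAux.prodA 1 0 0 hτ, h2, h3]
    simp only [sub_self, add_zero]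
    norm_num
    ring
  · -- m = 1, n = 0
    rw [ThetaAux.prodB 1 z z hτ, ThetaAux.prodA 0 w w hτ, ThetaAux.prodB 0 z z hτ,
      ThetaAux.prodA 1 w w hτ,
      mul_assoc ((-1 : ℂ) ^ 0) (theta 0 1 (z + w) τ) (theta 0 1 (z - w) τ),
      ThetaAux.prodA 1 (z + w) (z - w) hτ, ThetaAux.prodB 0 0 0 hτ, h2, h3]
    simp only [sub_self, add_zero]
    norm_num
    ring
  · -- m = 1, n = 1
    rw [ThetaAux.theta11_zero]
    norm_num
end

section
/- Let 0 < s₂ < s₁ and 0 < x ≤ 1, and set g_i(x) = √(x² s_i² + 1) / √(s_i² + 1) for i = 1, 2. Then s₁ g₂(x) − s₂ g₁(x) > 0 and (1/x) · (1 + s₁ s₂ g₁(x) g₂(x)) / (s₁ g₂(x) − s₂ g₁(x)) ≥ s₂. -/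
set_option maxHeartbeats 800000


theorem stmt_15 (x s₁ s₂ : ℝ) (hx0 : 0 < x) (hx1 : x ≤ 1) (h₂ : 0 < s₂) (h : s₂ < s₁) :
    0 < s₁ * (Real.sqrt (x ^ 2 * s₂ ^ 2 + 1) / Real.sqrt (s₂ ^ 2 + 1))
        - s₂ * (Real.sqrt (x ^ 2 * s₁ ^ 2 + 1) / Real.sqrt (s₁ ^ 2 + 1)) ∧
    s₂ ≤ (1 / x) *
        ((1 + s₁ * s₂ * (Real.sqrt (x ^ 2 * s₁ ^ 2 + 1) / Real.sqrt (s₁ ^ 2 + 1)) *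
            (Real.sqrt (x ^ 2 * s₂ ^ 2 + 1) / Real.sqrt (s₂ ^ 2 + 1))) /
          (s₁ * (Real.sqrt (x ^ 2 * s₂ ^ 2 + 1) / Real.sqrt (s₂ ^ 2 + 1))
            - s₂ * (Real.sqrt (x ^ 2 * s₁ ^ 2 + 1) / Real.sqrt (s₁ ^ 2 + 1)))) := by
  have h1 : 0 < s₁ := h₂.trans h
  set a := Real.sqrt (x ^ 2 * s₁ ^ 2 + 1) with ha
  set b := Real.sqrt (s₁ ^ 2 + 1) with hb
  set c := Real.sqrt (x ^ 2 * s₂ ^ 2 + 1) with hc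
  set d := Real.sqrt (s₂ ^ 2 + 1) with hd
  have pa : 0 < a := Real.sqrt_pos.2 (by positivity)
  have pb : 0 < b := Real.sqrt_pos.2 (by positivity)
  have pc : 0 < c := Real.sqrt_pos.2 (by positivity)
  have pd : 0 < d := Real.sqrt_pos.2 (by positivity)
  have sa : a ^ 2 = x ^ 2 * s₁ ^ 2 + 1 := Real.sq_sqrt (by positivity)
  have sb : b ^ 2 = s₁ ^ 2 + 1 := Real.sq_sqrt (by positivity)
  have sc : c ^ 2 = x ^ 2 * s₂ ^ 2 + 1 := Real.sq_sqrt (by positivity)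
  have sd : d ^ 2 = s₂ ^ 2 + 1 := Real.sq_sqrt (by positivity)
  have key : s₂ * a * d < s₁ * c * b := by
    have hsq : (s₂ * a * d) ^ 2 < (s₁ * c * b) ^ 2 := by
      have e1 : (s₂ * a * d) ^ 2 = s₂ ^ 2 * (x ^ 2 * s₁ ^ 2 + 1) * (s₂ ^ 2 + 1) := by
        rw [← sa, ← sd]; ring
      have e2 : (s₁ * c * b) ^ 2 = s₁ ^ 2 * (x ^ 2 * s₂ ^ 2 + 1) * (s₁ ^ 2 + 1) := by
        rw [← sc, ← sb]; ring
      rw [e1, e2]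
      have hss : s₂ ^ 2 < s₁ ^ 2 := by nlinarith
      nlinarith [mul_nonneg (mul_nonneg (sq_nonneg x) (sq_nonneg (s₁ * s₂)))
        (sub_pos.2 hss).le, hss, sq_nonneg (s₁ ^ 2 + s₂ ^ 2)]
    exact lt_of_pow_lt_pow_left₀ 2 (by positivity) hsq
  have hD : 0 < s₁ * (c / d) - s₂ * (a / b) := by
    have h' : s₂ * a / b < s₁ * c / d := (div_lt_div_iff₀ pb pd).2 (by nlinarith)
    rw [mul_div_assoc, mul_div_assoc] at h'
    linarith
  refine ⟨hD, ?_⟩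
  have xg1 : x ≤ a / b := by
    rw [le_div_iff₀ pb]
    have e : x * b = Real.sqrt (x ^ 2 * (s₁ ^ 2 + 1)) := by
      rw [hb, Real.sqrt_mul (by positivity), Real.sqrt_sq hx0.le]
    rw [e, ha]
    apply Real.sqrt_le_sqrt
    nlinarith
  have g2pos : 0 < c / d := div_pos pc pd
  have g1pos : 0 < a / b := div_pos pa pb
  have hnum : x * s₂ * (s₁ * (c / d) - s₂ * (a / b)) ≤ 1 + s₁ * s₂ * (a / b) * (c / d) := by
    nlinarith [mul_le_mul_of_nonneg_right xg1 (le_of_lt (mul_pos (mul_pos h1 h₂) g2pos)),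
      mul_nonneg (mul_nonneg hx0.le (mul_nonneg h₂.le h₂.le)) g1pos.le]
  have e : (1 / x) * ((1 + s₁ * s₂ * (a / b) * (c / d)) /
      (s₁ * (c / d) - s₂ * (a / b))) =
      (1 + s₁ * s₂ * (a / b) * (c / d)) / ((s₁ * (c / d) - s₂ * (a / b)) * x) := by
    rw [one_div, inv_mul_eq_div, div_div]
  rw [e, le_div_iff₀ (by positivity)]
  calc s₂ * ((s₁ * (c / d) - s₂ * (a / b)) * x)
      = x * s₂ * (s₁ * (c / d) - s₂ * (a / b)) := by ring
    _ ≤ 1 + s₁ * s₂ * (a / b) * (c / d) := hnum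
end

section
/- For τ in the upper half-plane, the theta constants satisfy Jacobi's identity θ_{1,0}(0, τ)⁴ + θ_{0,1}(0, τ)⁴ = θ_{0,0}(0, τ)⁴. Equivalently, defining the elliptic modulus k = θ_{1,0}²(0,τ)/θ_{0,0}²(0,τ) and the complementary modulus k' = θ_{0,1}²(0,τ)/θ_{0,0}²(0,τ), one has k² + k'² = 1. -/
open Complex
open scoped Real

theorem tsum_pow_four_of_summable_norm {R ι : Type*} [NormedRing R] [CompleteSpace R]
    {f : ι → R} (hf : Summable (‖f ·‖)) :
    (∑' i, f i) ^ 4 = ∑' q : (ι × ι) × (ι × ι), f q.1.1 * f q.1.2 * (f q.2.1 * f q.2.2) := by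
  have hf₂ := hf.mul_norm hf
  rw [show 4 = 2 * 2 from rfl, pow_mul, sq, sq, tsum_mul_tsum_of_summable_norm hf hf,
    tsum_mul_tsum_of_summable_norm hf₂ hf₂]

theorem tsum_sub_tsum_neg_one_zpow_mul {𝕜 α : Type*} [NormedField 𝕜] [CompleteSpace 𝕜]
    {f : α → 𝕜} (hf : Summable (‖f ·‖)) (n : α → ℤ) :
    ∑' a, f a - ∑' a, (-1) ^ n a * f a = 2 * ∑' a : {a // Odd (n a)}, f a := by
  have hsign : Summable fun a => (-1 : 𝕜) ^ n a * f a :=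
    .of_norm_bounded hf fun a => by simp
  calc ∑' a, f a - ∑' a, (-1) ^ n a * f a
      = ∑' a, {a | Odd (n a)}.indicator (2 * f ·) a := by
        rw [← hf.of_norm.tsum_sub hsign]
        refine tsum_congr fun a => ?_
        rcases Int.even_or_odd (n a) with h | h
        · rw [h.neg_one_zpow,
            Set.indicator_of_notMem (s := {a | Odd (n a)}) (Int.not_odd_iff_even.mpr h)]
          ring
        · rw [h.neg_one_zpow, Set.indicator_of_mem (s := {a | Odd (n a)}) h]
          ring
    _ = ∑' a : {a | Odd (n a)}, 2 * f a := (tsum_subtype _ _).symm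
    _ = 2 * ∑' a : {a // Odd (n a)}, f a := tsum_mul_left

/-- `ℤ⁴`, bracketed like the index type in `tsum_pow_four_of_summable_norm`. -/
abbrev Quad := (ℤ × ℤ) × (ℤ × ℤ)

def Quad.sum (v : Quad) : ℤ := v.1.1 + v.1.2 + (v.2.1 + v.2.2)

def Quad.sumSq (v : Quad) : ℤ := v.1.1 ^ 2 + v.1.2 ^ 2 + (v.2.1 ^ 2 + v.2.2 ^ 2)

abbrev OddQuad := {v : Quad // Odd (Quad.sum v)}

/-- For odd `x`, `x / 2 = (x - 1) / 2`, so on `OddQuad` the vector `2 * halfHadamard ε v + 1` is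
`H v` with its last entry multiplied by `ε`. -/
def halfHadamard (ε : ℤ) (v : Quad) : Quad :=
  (((v.1.1 + v.1.2 + v.2.1 + v.2.2) / 2, (v.1.1 + v.1.2 - v.2.1 - v.2.2) / 2),
    ((v.1.1 - v.1.2 + v.2.1 - v.2.2) / 2, ε * (v.1.1 - v.1.2 - v.2.1 + v.2.2) / 2))

theorem sumSq_two_mul_halfHadamard_add_one {ε : ℤ} (hε : ε = 1 ∨ ε = -1) {v : Quad}
    (hv : Odd (Quad.sum v)) :
    (2 * (halfHadamard ε v).1.1 + 1) ^ 2 + (2 * (halfHadamard ε v).1.2 + 1) ^ 2 +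
      ((2 * (halfHadamard ε v).2.1 + 1) ^ 2 + (2 * (halfHadamard ε v).2.2 + 1) ^ 2) =
      4 * Quad.sumSq v := by
  obtain ⟨⟨a, b⟩, ⟨c, d⟩⟩ := v
  replace hv := Int.odd_iff.mp hv
  simp only [Quad.sum] at hv
  have hhalf (x : ℤ) (hx : (x - (a + b + (c + d))) % 2 = 0) : 2 * (x / 2) + 1 = x :=
    Int.two_mul_ediv_two_add_one_of_odd (Int.odd_iff.mpr (by omega))
  rcases hε with rfl | rfl <;>
  · simp only [halfHadamard, Quad.sumSq]
    rw [hhalf _ (by omega), hhalf _ (by omega), hhalf _ (by omega), hhalf _ (by omega)]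
    ring

/-- `v = H x / 4` (recall `H² = 4`), where `x = 2 * w + 1` with its last entry negated when
`Quad.sum w` is odd. -/
def toOddQuadSum (w : Quad) : OddQuad ⊕ OddQuad :=
  if h : Even (Quad.sum w) then
    .inl ⟨(((Quad.sum w + 2) / 2, (w.1.1 + w.1.2 - w.2.1 - w.2.2) / 2),
      ((w.1.1 - w.1.2 + w.2.1 - w.2.2) / 2, (w.1.1 - w.1.2 - w.2.1 + w.2.2) / 2)),
      Int.odd_iff.mpr (by have := Int.even_iff.mp h; simp only [Quad.sum] at this ⊢; omega)⟩
  else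
    .inr ⟨(((w.1.1 + w.1.2 + w.2.1 - w.2.2 + 1) / 2, (w.1.1 + w.1.2 - w.2.1 + w.2.2 + 1) / 2),
      ((w.1.1 - w.1.2 + w.2.1 + w.2.2 + 1) / 2, (w.1.1 - w.1.2 - w.2.1 - w.2.2 - 1) / 2)),
      Int.odd_iff.mpr (by have := Int.not_even_iff.mp h; simp only [Quad.sum] at this ⊢; omega)⟩

def ofOddQuadSum : OddQuad ⊕ OddQuad → Quad
  | .inl v => halfHadamard 1 v
  | .inr v => halfHadamard (-1) v

theorem toOddQuadSum_halfHadamard_one (v : OddQuad) :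
    toOddQuadSum (halfHadamard 1 v) = .inl v := by
  obtain ⟨⟨⟨a, b⟩, ⟨c, d⟩⟩, hv⟩ := v
  replace hv := Int.odd_iff.mp hv
  simp only [Quad.sum] at hv
  have h : Even (Quad.sum (halfHadamard 1 ((a, b), c, d))) :=
    Int.even_iff.mpr (by simp only [Quad.sum, halfHadamard]; omega)
  rw [toOddQuadSum, dif_pos h, Sum.inl.injEq, Subtype.mk.injEq]
  simp only [halfHadamard, Quad.sum, Prod.mk.injEq]
  omega

theorem toOddQuadSum_halfHadamard_neg_one (v : OddQuad) :
    toOddQuadSum (halfHadamard (-1) v) = .inr v := by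
  obtain ⟨⟨⟨a, b⟩, ⟨c, d⟩⟩, hv⟩ := v
  replace hv := Int.odd_iff.mp hv
  simp only [Quad.sum] at hv
  have h : ¬Even (Quad.sum (halfHadamard (-1) ((a, b), c, d))) :=
    Int.not_even_iff.mpr (by simp only [Quad.sum, halfHadamard]; omega)
  rw [toOddQuadSum, dif_neg h, Sum.inr.injEq, Subtype.mk.injEq]
  simp only [halfHadamard, Prod.mk.injEq]
  omega

theorem ofOddQuadSum_toOddQuadSum (w : Quad) : ofOddQuadSum (toOddQuadSum w) = w := by
  obtain ⟨⟨a, b⟩, ⟨c, d⟩⟩ := w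
  by_cases h : Even (Quad.sum ((a, b), c, d))
  · rw [toOddQuadSum, dif_pos h]
    replace h := Int.even_iff.mp h
    simp only [Quad.sum, ofOddQuadSum, halfHadamard, Prod.mk.injEq] at h ⊢
    omega
  · rw [toOddQuadSum, dif_neg h]
    replace h := Int.not_even_iff.mp h
    simp only [Quad.sum, ofOddQuadSum, halfHadamard, Prod.mk.injEq] at h ⊢
    omega

def oddQuadSumEquiv : OddQuad ⊕ OddQuad ≃ Quad where
  toFun := ofOddQuadSum
  invFun := toOddQuadSum
  left_inv := by
    rintro (v | v)
    exacts [toOddQuadSum_halfHadamard_one v, toOddQuadSum_halfHadamard_neg_one v]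
  right_inv := ofOddQuadSum_toOddQuadSum

noncomputable def thetaTerm (τ x : ℂ) : ℂ := cexp (π * I * τ * x ^ 2)

noncomputable def quadTerm (τ : ℂ) (v : Quad) : ℂ := cexp (π * I * τ * Quad.sumSq v)

theorem thetaTerm_mul_mul_mul (τ x y z w : ℂ) :
    thetaTerm τ x * thetaTerm τ y * (thetaTerm τ z * thetaTerm τ w) =
      cexp (π * I * τ * (x ^ 2 + y ^ 2 + (z ^ 2 + w ^ 2))) := by
  simp only [thetaTerm, ← Complex.exp_add]
  ring_nf

theorem thetaTerm_mul_mul_mul_intCast (τ : ℂ) (v : Quad) :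
    thetaTerm τ v.1.1 * thetaTerm τ v.1.2 * (thetaTerm τ v.2.1 * thetaTerm τ v.2.2) =
      quadTerm τ v := by
  rw [thetaTerm_mul_mul_mul, quadTerm, Quad.sumSq]
  push_cast
  rfl

theorem thetaTerm_halfHadamard_add_half {ε : ℤ} (hε : ε = 1 ∨ ε = -1) (τ : ℂ) {v : Quad}
    (hv : Odd (Quad.sum v)) :
    thetaTerm τ ((halfHadamard ε v).1.1 + 1 / 2) * thetaTerm τ ((halfHadamard ε v).1.2 + 1 / 2) *
      (thetaTerm τ ((halfHadamard ε v).2.1 + 1 / 2) *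
        thetaTerm τ ((halfHadamard ε v).2.2 + 1 / 2)) = quadTerm τ v := by
  have h := congrArg (Int.cast : ℤ → ℂ) (sumSq_two_mul_halfHadamard_add_one hε hv)
  push_cast at h
  rw [thetaTerm_mul_mul_mul, quadTerm]
  congr 1
  linear_combination π * I * τ / 4 * h

theorem thetaTerm_int_add (τ c : ℂ) (k : ℤ) :
    thetaTerm τ (k + c) = thetaTerm τ c * jacobiTheta₂_term k (c * τ) τ := by
  rw [thetaTerm, thetaTerm, jacobiTheta₂_term, ← Complex.exp_add]
  ring_nf

theorem summable_norm_thetaTerm_int_add {τ : ℂ} (hτ : 0 < τ.im) (c : ℂ) :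
    Summable fun k : ℤ => ‖thetaTerm τ (k + c)‖ := by
  simp_rw [thetaTerm_int_add, norm_mul]
  exact (summable_norm_iff.mpr ((summable_jacobiTheta₂_term_iff _ _).mpr hτ)).mul_left _

theorem summable_norm_thetaTerm_int {τ : ℂ} (hτ : 0 < τ.im) :
    Summable fun k : ℤ => ‖thetaTerm τ k‖ := by
  simpa using summable_norm_thetaTerm_int_add hτ 0

theorem summable_norm_quadTerm {τ : ℂ} (hτ : 0 < τ.im) : Summable fun v => ‖quadTerm τ v‖ := by
  have hf := summable_norm_thetaTerm_int hτ
  simpa only [thetaTerm_mul_mul_mul_intCast] using (hf.mul_norm hf).mul_norm (hf.mul_norm hf)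

theorem theta_zero_zero_zero (τ : ℂ) : theta 0 0 0 τ = ∑' k : ℤ, thetaTerm τ k := by
  simp [theta, thetaTerm]

theorem theta_zero_one_zero (τ : ℂ) :
    theta 0 1 0 τ = ∑' k : ℤ, (-1) ^ k * thetaTerm τ k := by
  refine tsum_congr fun k => ?_
  rw [thetaTerm, ← exp_pi_mul_I, ← exp_int_mul, ← Complex.exp_add]
  push_cast
  ring_nf

theorem theta_one_zero_zero (τ : ℂ) :
    theta 1 0 0 τ = ∑' k : ℤ, thetaTerm τ (k + 1 / 2) := by
  simp [theta, thetaTerm]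

theorem theta_zero_zero_zero_pow_four {τ : ℂ} (hτ : 0 < τ.im) :
    theta 0 0 0 τ ^ 4 = ∑' v, quadTerm τ v := by
  rw [theta_zero_zero_zero, tsum_pow_four_of_summable_norm (summable_norm_thetaTerm_int hτ)]
  simp only [thetaTerm_mul_mul_mul_intCast]

theorem theta_zero_one_zero_pow_four {τ : ℂ} (hτ : 0 < τ.im) :
    theta 0 1 0 τ ^ 4 = ∑' v, (-1) ^ Quad.sum v * quadTerm τ v := by
  have hf : Summable fun k : ℤ => ‖(-1 : ℂ) ^ k * thetaTerm τ k‖ := by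
    simpa using summable_norm_thetaTerm_int hτ
  rw [theta_zero_one_zero, tsum_pow_four_of_summable_norm hf]
  have hunit : (-1 : ℂ) ≠ 0 := by norm_num
  refine tsum_congr fun v => ?_
  rw [← thetaTerm_mul_mul_mul_intCast, Quad.sum, zpow_add₀ hunit, zpow_add₀ hunit, zpow_add₀ hunit]
  ring

theorem theta_one_zero_zero_pow_four {τ : ℂ} (hτ : 0 < τ.im) :
    theta 1 0 0 τ ^ 4 = 2 * ∑' v : OddQuad, quadTerm τ v := by
  have hodd : Summable fun v : OddQuad => quadTerm τ v :=
    (summable_norm_quadTerm hτ).of_norm.subtype _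
  rw [theta_one_zero_zero,
    tsum_pow_four_of_summable_norm (summable_norm_thetaTerm_int_add hτ (1 / 2)),
    ← oddQuadSumEquiv.tsum_eq]
  have h₁ (v : OddQuad) := thetaTerm_halfHadamard_add_half (.inl rfl) τ v.2
  have h₂ (v : OddQuad) := thetaTerm_halfHadamard_add_half (.inr rfl) τ v.2
  rw [Summable.tsum_sum, two_mul]
  · exact congrArg₂ (· + ·) (tsum_congr h₁) (tsum_congr h₂)
  · exact hodd.congr fun v => (h₁ v).symm
  · exact hodd.congr fun v => (h₂ v).symm

theorem theta_one_zero_zero_pow_four_add_theta_zero_one_zero_pow_four {τ : ℂ} (hτ : 0 < τ.im) :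
    theta 1 0 0 τ ^ 4 + theta 0 1 0 τ ^ 4 = theta 0 0 0 τ ^ 4 := by
  rw [theta_one_zero_zero_pow_four hτ, theta_zero_one_zero_pow_four hτ,
    theta_zero_zero_zero_pow_four hτ,
    ← tsum_sub_tsum_neg_one_zpow_mul (summable_norm_quadTerm hτ) Quad.sum]
  ring

theorem stmt_16 (τ : ℂ) (hτ : 0 < τ.im) (hne : theta 0 0 0 τ ≠ 0) :
    theta 1 0 0 τ ^ 4 + theta 0 1 0 τ ^ 4 = theta 0 0 0 τ ^ 4 ∧
    (theta 1 0 0 τ ^ 2 / theta 0 0 0 τ ^ 2) ^ 2 +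
      (theta 0 1 0 τ ^ 2 / theta 0 0 0 τ ^ 2) ^ 2 = 1 := by
  have jacobi := theta_one_zero_zero_pow_four_add_theta_zero_one_zero_pow_four hτ
  refine ⟨jacobi, ?_⟩
  field_simp
  linear_combination jacobi
end

section
/- For τ in the upper half-plane and all α, β ∈ ℂ at which the denominators are nonzero, the following theta-function identity (ascending Landen transformation) holds: [θ_{1,1}(α,τ) θ_{1,0}(β,τ)] / [θ_{1,0}(α,τ) θ_{1,1}(β,τ)] = [θ_{1,1}(α, 2τ−1) θ_{0,0}(α, 2τ−1) θ_{1,0}(β, 2τ−1) θ_{0,1}(β, 2τ−1)] / [θ_{1,0}(α, 2τ−1) θ_{0,1}(α, 2τ−1) θ_{1,1}(β, 2τ−1) θ_{0,0}(β, 2τ−1)]. -/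
open Complex

namespace Landen

noncomputable def thetaTerm (m n : ℕ) (z τ : ℂ) (k : ℤ) : ℂ :=
  Complex.exp (Real.pi * Complex.I * τ * ((k : ℂ) + (m : ℂ) / 2) ^ 2
    + 2 * Real.pi * Complex.I * ((k : ℂ) + (m : ℂ) / 2) * (z + (n : ℂ) / 2))

lemma theta_eq_tsum (m n : ℕ) (z τ : ℂ) : theta m n z τ = ∑' k : ℤ, thetaTerm m n z τ k := rfl

lemma thetaTerm_eq (m n : ℕ) (z τ : ℂ) (k : ℤ) :
    thetaTerm m n z τ k
      = Complex.exp (Real.pi * Complex.I * τ * (m : ℂ) ^ 2 / 4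
          + Real.pi * Complex.I * (m : ℂ) * (z + (n : ℂ) / 2))
        * jacobiTheta₂_term k (z + (n : ℂ) / 2 + (m : ℂ) * τ / 2) τ := by
  unfold thetaTerm jacobiTheta₂_term
  rw [← Complex.exp_add]
  congr 1
  ring

lemma summable_thetaTerm (m n : ℕ) (z : ℂ) {τ : ℂ} (hτ : 0 < τ.im) :
    Summable (thetaTerm m n z τ) := by
  have := ((summable_jacobiTheta₂_term_iff (z + (n : ℂ) / 2 + (m : ℂ) * τ / 2) τ).mpr hτ).mul_left
    (Complex.exp (Real.pi * Complex.I * τ * (m : ℂ) ^ 2 / 4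
      + Real.pi * Complex.I * (m : ℂ) * (z + (n : ℂ) / 2)))
  refine this.congr fun k => ?_
  rw [thetaTerm_eq]

noncomputable def Dterm (τ : ℂ) (l : ℤ) : ℂ :=
  Complex.exp (Real.pi * Complex.I * (-(1/4 : ℂ) + 4 * τ * ((l : ℂ) + 1/4) ^ 2))

noncomputable def Dfun (τ : ℂ) : ℂ := ∑' l : ℤ, Dterm τ l

lemma Dterm_eq (τ : ℂ) (l : ℤ) :
    Dterm τ l = Complex.exp (Real.pi * Complex.I * (-(1/4 : ℂ) + τ / 4))
      * jacobiTheta₂_term l τ (4 * τ) := by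
  unfold Dterm jacobiTheta₂_term
  rw [← Complex.exp_add]
  congr 1
  ring

lemma summable_Dterm {τ : ℂ} (hτ : 0 < τ.im) : Summable (Dterm τ) := by
  have h4 : 0 < (4 * τ).im := by simp; linarith
  have := ((summable_jacobiTheta₂_term_iff τ (4 * τ)).mpr h4).mul_left
    (Complex.exp (Real.pi * Complex.I * (-(1/4 : ℂ) + τ / 4)))
  refine this.congr fun l => ?_
  rw [Dterm_eq]

/-- The reindexing bijection `(l, u) ↦ (j, k)` for the Landen transformation. -/
def landenEquiv : ℤ × ℤ ≃ ℤ × ℤ where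
  toFun q := if q.2 % 2 = 0 then (q.2 / 2 + q.1, q.2 / 2 - q.1)
    else ((q.2 - 1) / 2 - q.1, (q.2 + 1) / 2 + q.1)
  invFun p := (if (p.1 + p.2) % 2 = 0 then (p.1 - p.2) / 2 else (p.2 - p.1 - 1) / 2, p.1 + p.2)
  left_inv := by
    rintro ⟨l, u⟩
    by_cases h : u % 2 = 0 <;>
      simp only [h, if_pos, if_neg, ite_true, ite_false, reduceIte, Prod.mk.injEq] <;>
      split_ifs <;> constructor <;> omega
  right_inv := by
    rintro ⟨j, k⟩
    by_cases h : (j + k) % 2 = 0 <;>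
      simp only [h, ite_true, ite_false, reduceIte, Prod.mk.injEq] <;>
      refine ⟨by omega, by omega⟩

lemma exp_eq_of_sub_int (a b : ℂ) (n : ℤ) (h : b = a + (n : ℂ) * (2 * Real.pi * Complex.I)) :
    Complex.exp b = Complex.exp a := by
  rw [h, Complex.exp_add, Complex.exp_int_mul_two_pi_mul_I, mul_one]

lemma landen_termA (z τ : ℂ) (q : ℤ × ℤ) :
    Dterm τ q.1 * thetaTerm 1 1 z τ q.2
      = thetaTerm 1 1 z (2 * τ - 1) (landenEquiv q).1
        * thetaTerm 0 0 z (2 * τ - 1) (landenEquiv q).2 := by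
  obtain ⟨l, u⟩ := q
  rcases Int.even_or_odd u with ⟨m, rfl⟩ | ⟨m, rfl⟩
  · have h1 : (m + m) % 2 = 0 := by omega
    have h2 : (m + m) / 2 = m := by omega
    simp only [landenEquiv, Equiv.coe_fn_mk, h1, h2, ite_true, reduceIte]
    unfold Dterm thetaTerm
    rw [← Complex.exp_add, ← Complex.exp_add]
    refine exp_eq_of_sub_int _ _ (m ^ 2 + m + l ^ 2) ?_
    push_cast
    ring
  · have h1 : ¬ (2 * m + 1) % 2 = 0 := by omega
    have h2 : (2 * m + 1 - 1) / 2 = m := by omega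
    have h3 : (2 * m + 1 + 1) / 2 = m + 1 := by omega
    simp only [landenEquiv, Equiv.coe_fn_mk, h1, h2, h3, ite_false, reduceIte]
    unfold Dterm thetaTerm
    rw [← Complex.exp_add, ← Complex.exp_add]
    refine exp_eq_of_sub_int _ _ (m ^ 2 + 2 * m + l ^ 2 + l + 1) ?_
    push_cast
    ring

lemma landen_termB (z τ : ℂ) (q : ℤ × ℤ) :
    Dterm τ q.1 * thetaTerm 1 0 z τ q.2
      = thetaTerm 1 0 z (2 * τ - 1) (landenEquiv q).1
        * thetaTerm 0 1 z (2 * τ - 1) (landenEquiv q).2 := by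
  obtain ⟨l, u⟩ := q
  rcases Int.even_or_odd u with ⟨m, rfl⟩ | ⟨m, rfl⟩
  · have h1 : (m + m) % 2 = 0 := by omega
    have h2 : (m + m) / 2 = m := by omega
    simp only [landenEquiv, Equiv.coe_fn_mk, h1, h2, ite_true, reduceIte]
    unfold Dterm thetaTerm
    rw [← Complex.exp_add, ← Complex.exp_add]
    refine exp_eq_of_sub_int _ _ (m ^ 2 + l ^ 2 + l) ?_
    push_cast
    ring
  · have h1 : ¬ (2 * m + 1) % 2 = 0 := by omega
    have h2 : (2 * m + 1 - 1) / 2 = m := by omega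
    have h3 : (2 * m + 1 + 1) / 2 = m + 1 := by omega
    simp only [landenEquiv, Equiv.coe_fn_mk, h1, h2, h3, ite_false, reduceIte]
    unfold Dterm thetaTerm
    rw [← Complex.exp_add, ← Complex.exp_add]
    refine exp_eq_of_sub_int _ _ (m ^ 2 + m + l ^ 2) ?_
    push_cast
    ring

lemma im_two_mul_sub_one {τ : ℂ} (hτ : 0 < τ.im) : 0 < (2 * τ - 1).im := by
  simp; linarith

lemma keyA {τ : ℂ} (hτ : 0 < τ.im) (z : ℂ) :
    theta 1 1 z (2 * τ - 1) * theta 0 0 z (2 * τ - 1) = Dfun τ * theta 1 1 z τ := by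
  have h2 := im_two_mul_sub_one hτ
  rw [theta_eq_tsum, theta_eq_tsum, theta_eq_tsum, Dfun,
    tsum_mul_tsum_of_summable_norm (summable_thetaTerm 1 1 z h2).norm
      (summable_thetaTerm 0 0 z h2).norm,
    tsum_mul_tsum_of_summable_norm (summable_Dterm hτ).norm
      (summable_thetaTerm 1 1 z hτ).norm]
  rw [← Equiv.tsum_eq landenEquiv
    (fun p : ℤ × ℤ => thetaTerm 1 1 z (2 * τ - 1) p.1 * thetaTerm 0 0 z (2 * τ - 1) p.2)]
  exact tsum_congr fun q => (landen_termA z τ q).symm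

lemma keyB {τ : ℂ} (hτ : 0 < τ.im) (z : ℂ) :
    theta 1 0 z (2 * τ - 1) * theta 0 1 z (2 * τ - 1) = Dfun τ * theta 1 0 z τ := by
  have h2 := im_two_mul_sub_one hτ
  rw [theta_eq_tsum, theta_eq_tsum, theta_eq_tsum, Dfun,
    tsum_mul_tsum_of_summable_norm (summable_thetaTerm 1 0 z h2).norm
      (summable_thetaTerm 0 1 z h2).norm,
    tsum_mul_tsum_of_summable_norm (summable_Dterm hτ).norm
      (summable_thetaTerm 1 0 z hτ).norm]
  rw [← Equiv.tsum_eq landenEquiv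
    (fun p : ℤ × ℤ => thetaTerm 1 0 z (2 * τ - 1) p.1 * thetaTerm 0 1 z (2 * τ - 1) p.2)]
  exact tsum_congr fun q => (landen_termB z τ q).symm

end Landen

theorem stmt_18 (τ : ℂ) (hτ : 0 < τ.im) (α β : ℂ)
    (h1 : theta 1 0 α τ ≠ 0) (h2 : theta 1 1 β τ ≠ 0)
    (h3 : theta 1 0 α (2 * τ - 1) ≠ 0) (h4 : theta 0 1 α (2 * τ - 1) ≠ 0)
    (h5 : theta 1 1 β (2 * τ - 1) ≠ 0) (h6 : theta 0 0 β (2 * τ - 1) ≠ 0) :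
    theta 1 1 α τ * theta 1 0 β τ / (theta 1 0 α τ * theta 1 1 β τ)
      = theta 1 1 α (2 * τ - 1) * theta 0 0 α (2 * τ - 1) * theta 1 0 β (2 * τ - 1) *
          theta 0 1 β (2 * τ - 1) /
        (theta 1 0 α (2 * τ - 1) * theta 0 1 α (2 * τ - 1) * theta 1 1 β (2 * τ - 1) *
          theta 0 0 β (2 * τ - 1)) := by
  have eA : theta 1 1 α (2 * τ - 1) * theta 0 0 α (2 * τ - 1)
      = Landen.Dfun τ * theta 1 1 α τ := Landen.keyA hτ α
  have eB : theta 1 0 β (2 * τ - 1) * theta 0 1 β (2 * τ - 1)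
      = Landen.Dfun τ * theta 1 0 β τ := Landen.keyB hτ β
  have eC : theta 1 0 α (2 * τ - 1) * theta 0 1 α (2 * τ - 1)
      = Landen.Dfun τ * theta 1 0 α τ := Landen.keyB hτ α
  have eD : theta 1 1 β (2 * τ - 1) * theta 0 0 β (2 * τ - 1)
      = Landen.Dfun τ * theta 1 1 β τ := Landen.keyA hτ β
  have hD : Landen.Dfun τ ≠ 0 := by
    intro h
    rw [h, zero_mul] at eC
    exact mul_ne_zero h3 h4 eC
  rw [show theta 1 1 α (2 * τ - 1) * theta 0 0 α (2 * τ - 1) * theta 1 0 β (2 * τ - 1) *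
      theta 0 1 β (2 * τ - 1)
      = (theta 1 1 α (2 * τ - 1) * theta 0 0 α (2 * τ - 1)) *
        (theta 1 0 β (2 * τ - 1) * theta 0 1 β (2 * τ - 1)) from by ring,
    show theta 1 0 α (2 * τ - 1) * theta 0 1 α (2 * τ - 1) * theta 1 1 β (2 * τ - 1) *
      theta 0 0 β (2 * τ - 1)
      = (theta 1 0 α (2 * τ - 1) * theta 0 1 α (2 * τ - 1)) *
        (theta 1 1 β (2 * τ - 1) * theta 0 0 β (2 * τ - 1)) from by ring,
    eA, eB, eC, eD]
  rw [div_eq_div_iff (mul_ne_zero h1 h2)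
    (mul_ne_zero (mul_ne_zero hD h1) (mul_ne_zero hD h2))]
  ring
end
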